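/- Let (A,•) be a mock-Lie algebra with a symmetric nondegenerate invariant bilinear form ω, let φ: A → A* be given by ⟨φ(x),y⟩ = ω(x,y), and let r ∈ A⊗A be skew-symmetric (viewed as a map A* → A). Then r is a solution of the mock-Lie Yang–Baxter equation if and only if r∘φ: A → A is a Rota–Baxter operator of weight zero, i.e. (rφ(x))•(rφ(y)) = rφ((rφ(x))•y + x•(rφ(y))) for all x,y ∈ A. -/

import Mathlib

open TensorProduct

variable {K A : Type*} [Field K] [AddCommGroup A] [Module K A]

/-- Cyclic permutation `σ(x⊗y⊗z) = y⊗z⊗x` on `A ⊗ (A ⊗ A)`. -/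
noncomputable def cyc (K A : Type*) [Field K] [AddCommGroup A] [Module K A] :
    A ⊗[K] (A ⊗[K] A) →ₗ[K] A ⊗[K] (A ⊗[K] A) :=
  (TensorProduct.assoc K A A A).toLinearMap ∘ₗ
    (TensorProduct.comm K A (A ⊗[K] A)).toLinearMap

/-- `(a⊗b)⊗(a'⊗b') ↦ (a•a')⊗(b⊗b')`, giving `r₁₂•r₁₃` when applied to `r ⊗ r`. -/
noncomputable def c1213 (m : A →ₗ[K] A →ₗ[K] A) :
    (A ⊗[K] A) ⊗[K] (A ⊗[K] A) →ₗ[K] A ⊗[K] (A ⊗[K] A) :=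
  (TensorProduct.map (TensorProduct.lift m) LinearMap.id) ∘ₗ
    (TensorProduct.tensorTensorTensorComm K A A A A).toLinearMap

/-- `(a⊗b)⊗(a'⊗b') ↦ a⊗(a'⊗(b•b'))`, giving `r₁₃•r₂₃` when applied to `r ⊗ r`. -/
noncomputable def c1323 (m : A →ₗ[K] A →ₗ[K] A) :
    (A ⊗[K] A) ⊗[K] (A ⊗[K] A) →ₗ[K] A ⊗[K] (A ⊗[K] A) :=
  (LinearMap.lTensor A (LinearMap.lTensor A (TensorProduct.lift m))) ∘ₗ
    (TensorProduct.assoc K A A (A ⊗[K] A)).toLinearMap ∘ₗ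
    (TensorProduct.tensorTensorTensorComm K A A A A).toLinearMap

/-- `(a⊗b)⊗(a'⊗b') ↦ a⊗((b•a')⊗b')`, giving `r₁₂•r₂₃` when applied to `r ⊗ r`. -/
noncomputable def c1223 (m : A →ₗ[K] A →ₗ[K] A) :
    (A ⊗[K] A) ⊗[K] (A ⊗[K] A) →ₗ[K] A ⊗[K] (A ⊗[K] A) :=
  (LinearMap.lTensor A
      ((LinearMap.rTensor A (TensorProduct.lift m)) ∘ₗ
        (TensorProduct.assoc K A A A).symm.toLinearMap)) ∘ₗ
    (TensorProduct.assoc K A A (A ⊗[K] A)).toLinearMap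

/-- `[[r,r]] = r₁₂•r₁₃ + r₁₃•r₂₃ - r₁₂•r₂₃ ∈ A ⊗ A ⊗ A`. -/
noncomputable def mockYB (m : A →ₗ[K] A →ₗ[K] A) (r : A ⊗[K] A) :
    A ⊗[K] (A ⊗[K] A) :=
  c1213 m (r ⊗ₜ[K] r) + c1323 m (r ⊗ₜ[K] r) - c1223 m (r ⊗ₜ[K] r)

/-! ### Auxiliary material -/

/-- Contraction of the second tensor factor against a functional. -/
noncomputable def ctr2 (ζ : Module.Dual K A) : A ⊗[K] A →ₗ[K] A :=
  (TensorProduct.rid K A).toLinearMap ∘ₗ LinearMap.lTensor A ζ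

/-- Contraction of the first tensor factor against a functional. -/
noncomputable def ctr1 (η : Module.Dual K A) : A ⊗[K] A →ₗ[K] A :=
  (TensorProduct.lid K A).toLinearMap ∘ₗ LinearMap.rTensor A η

@[simp] lemma ctr2_tmul (ζ : Module.Dual K A) (a b : A) : ctr2 ζ (a ⊗ₜ[K] b) = ζ b • a := by
  simp [ctr2]

@[simp] lemma ctr1_tmul (η : Module.Dual K A) (a b : A) : ctr1 η (a ⊗ₜ[K] b) = η a • b := by
  simp [ctr1]

lemma dd_ctr2 (ξ ζ : Module.Dual K A) (s : A ⊗[K] A) :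
    ξ (ctr2 ζ s) = TensorProduct.dualDistrib K A A (ξ ⊗ₜ ζ) s := by
  induction s using TensorProduct.induction_on with
  | zero => simp
  | tmul a b => simp [mul_comm]
  | add x y hx hy => simp [map_add, hx, hy]

lemma dd_ctr1 (ξ η : Module.Dual K A) (s : A ⊗[K] A) :
    ξ (ctr1 η s) = TensorProduct.dualDistrib K A A (η ⊗ₜ ξ) s := by
  induction s using TensorProduct.induction_on with
  | zero => simp
  | tmul a b => simp [mul_comm]
  | add x y hx hy => simp [map_add, hx, hy]

lemma dd_comm (ξ η : Module.Dual K A) (s : A ⊗[K] A) :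
    TensorProduct.dualDistrib K A A (ξ ⊗ₜ η) (TensorProduct.comm K A A s)
      = TensorProduct.dualDistrib K A A (η ⊗ₜ ξ) s := by
  induction s using TensorProduct.induction_on with
  | zero => simp
  | tmul a b => simp [mul_comm]
  | add x y hx hy => simp [map_add, hx, hy]

lemma dd_surj {M N : Type*} [AddCommGroup M] [Module K M] [AddCommGroup N] [Module K N]
    [Module.Finite K M] [Module.Finite K N] :
    Function.Surjective (TensorProduct.dualDistrib K M N) := by
  intro f
  refine ⟨TensorProduct.dualDistribInvOfBasis (Module.Free.chooseBasis K M)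
    (Module.Free.chooseBasis K N) f, ?_⟩
  exact DFunLike.congr_fun
    (TensorProduct.dualDistrib_dualDistribInvOfBasis_left_inverse
      (Module.Free.chooseBasis K M) (Module.Free.chooseBasis K N)) f

/-- The triple dual pairing `ξ ⊗ η ⊗ ζ` on `A ⊗ (A ⊗ A)`. -/
noncomputable def P3 (ξ η ζ : Module.Dual K A) : Module.Dual K (A ⊗[K] (A ⊗[K] A)) :=
  TensorProduct.dualDistrib K A (A ⊗[K] A) (ξ ⊗ₜ (TensorProduct.dualDistrib K A A (η ⊗ₜ ζ)))

lemma sep [FiniteDimensional K A] (t : A ⊗[K] (A ⊗[K] A))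
    (h : ∀ ξ η ζ : Module.Dual K A, P3 ξ η ζ t = 0) : t = 0 := by
  rw [← Module.forall_dual_apply_eq_zero_iff K t]
  intro f
  obtain ⟨g, rfl⟩ := dd_surj f
  induction g using TensorProduct.induction_on with
  | zero => simp
  | add x y hx hy => simp only [map_add, LinearMap.add_apply, hx, hy, add_zero]
  | tmul ξ c =>
    obtain ⟨d, rfl⟩ := dd_surj c
    induction d using TensorProduct.induction_on with
    | zero => simp
    | add u v hu hv =>
      simp only [map_add, tmul_add, LinearMap.add_apply, hu, hv, add_zero]
    | tmul η ζ => exact h ξ η ζ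

lemma lemA (m : A →ₗ[K] A →ₗ[K] A) (ξ η ζ : Module.Dual K A) (s t : A ⊗[K] A) :
    P3 ξ η ζ (c1213 m (s ⊗ₜ t)) =
      TensorProduct.dualDistrib K A A ((ξ ∘ₗ m.flip (ctr2 ζ t)) ⊗ₜ η) s := by
  induction s using TensorProduct.induction_on with
  | zero => simp [map_add, zero_tmul, add_tmul, tmul_add]
  | add x y hx hy => simp only [add_tmul, map_add, hx, hy]
  | tmul a b =>
    induction t using TensorProduct.induction_on with
    | zero => simp [map_add, zero_tmul, tmul_zero]
    | add x y hx hy =>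
      simp only [tmul_add, map_add, hx, hy, LinearMap.comp_apply]
      simp [add_tmul, tmul_add, mul_add, add_mul, mul_comm, mul_left_comm]
    | tmul a' b' =>
      simp [P3, c1213, tensorTensorTensorComm_tmul, mul_comm, mul_left_comm]
      ring

lemma lemB (m : A →ₗ[K] A →ₗ[K] A) (ξ η ζ : Module.Dual K A) (s t : A ⊗[K] A) :
    P3 ξ η ζ (c1323 m (s ⊗ₜ t)) =
      TensorProduct.dualDistrib K A A (ξ ⊗ₜ (ζ ∘ₗ m.flip (ctr1 η t))) s := by
  induction s using TensorProduct.induction_on with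
  | zero => simp [map_add, zero_tmul, add_tmul, tmul_add]
  | add x y hx hy => simp only [add_tmul, map_add, hx, hy]
  | tmul a b =>
    induction t using TensorProduct.induction_on with
    | zero => simp [map_add, zero_tmul, tmul_zero]
    | add x y hx hy =>
      simp only [tmul_add, map_add, hx, hy, LinearMap.comp_apply]
      simp [add_tmul, tmul_add, mul_add, add_mul, mul_comm, mul_left_comm]
    | tmul a' b' =>
      simp [P3, c1323, tensorTensorTensorComm_tmul, mul_comm, mul_left_comm]

lemma lemC (m : A →ₗ[K] A →ₗ[K] A) (ξ η ζ : Module.Dual K A) (s t : A ⊗[K] A) :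
    P3 ξ η ζ (c1223 m (s ⊗ₜ t)) =
      TensorProduct.dualDistrib K A A (ξ ⊗ₜ (η ∘ₗ m.flip (ctr2 ζ t))) s := by
  induction s using TensorProduct.induction_on with
  | zero => simp [map_add, zero_tmul, add_tmul, tmul_add]
  | add x y hx hy => simp only [add_tmul, map_add, hx, hy]
  | tmul a b =>
    induction t using TensorProduct.induction_on with
    | zero => simp [map_add, zero_tmul, tmul_zero]
    | add x y hx hy =>
      simp only [tmul_add, map_add, hx, hy, LinearMap.comp_apply]
      simp [add_tmul, tmul_add, mul_add, add_mul, mul_comm, mul_left_comm]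
    | tmul a' b' =>
      simp [P3, c1223, mul_comm, mul_left_comm]

/-- For a mock-Lie algebra with symmetric nondegenerate invariant form `ω` and a
skew-symmetric `r`, `r` solves the mock-Lie Yang–Baxter equation iff `r∘φ` is a
Rota–Baxter operator of weight zero. -/
theorem stmt17 {K A : Type*} [Field K] [CharZero K] [AddCommGroup A] [Module K A]
    [FiniteDimensional K A]
    (m : A →ₗ[K] A →ₗ[K] A) (hcomm : ∀ x y : A, m x y = m y x)
    (hjac : ∀ x y z : A, m x (m y z) + m y (m z x) + m z (m x y) = 0)
    (ω : A →ₗ[K] A →ₗ[K] K) (hsym : ∀ x y : A, ω x y = ω y x)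
    (hnd : ω.Nondegenerate)
    (hinv : ∀ x y z : A, ω (m x y) z = ω x (m y z))
    (r : A ⊗[K] A) (hskew : TensorProduct.comm K A A r = -r)
    (rmap : Module.Dual K A →ₗ[K] A)
    (hr : ∀ ξ η : Module.Dual K A,
      ξ (rmap η) = TensorProduct.dualDistrib K A A (ξ ⊗ₜ η) r) :
    mockYB m r = 0 ↔
    (∀ x y : A,
      m (rmap (ω x)) (rmap (ω y)) =
        rmap (ω (m (rmap (ω x)) y + m x (rmap (ω y))))) := by
  classical
  -- contraction identities for `r`
  have hctr2 : ∀ ζ : Module.Dual K A, ctr2 ζ r = rmap ζ := by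
    intro ζ
    rw [← sub_eq_zero, ← Module.forall_dual_apply_eq_zero_iff K]
    intro ξ
    rw [map_sub, dd_ctr2, ← hr, sub_self]
  have hctr1 : ∀ η : Module.Dual K A, ctr1 η r = -rmap η := by
    intro η
    rw [← sub_eq_zero, ← Module.forall_dual_apply_eq_zero_iff K]
    intro ξ
    have h1 : TensorProduct.dualDistrib K A A (η ⊗ₜ ξ) r = -ξ (rmap η) := by
      have h2 := dd_comm η ξ r
      rw [hskew, map_neg] at h2
      rw [← hr ξ η] at h2
      exact neg_eq_iff_eq_neg.mp h2
    rw [map_sub, dd_ctr1, h1, map_neg, sub_neg_eq_add, neg_add_cancel]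
  -- evaluation of the three summands of `mockYB`
  have pA : ∀ ξ η ζ : Module.Dual K A,
      P3 ξ η ζ (c1213 m (r ⊗ₜ r)) = ξ (m (rmap η) (rmap ζ)) := by
    intro ξ η ζ
    rw [lemA, hctr2, ← hr]
    simp
  have pB : ∀ ξ η ζ : Module.Dual K A,
      P3 ξ η ζ (c1323 m (r ⊗ₜ r)) = -ξ (rmap (ζ ∘ₗ m.flip (rmap η))) := by
    intro ξ η ζ
    rw [lemB, hctr1]
    have hneg : ζ ∘ₗ m.flip (-rmap η) = -(ζ ∘ₗ m.flip (rmap η)) := by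
      ext b; simp
    rw [hneg]
    simp only [tmul_neg, neg_tmul, map_neg, LinearMap.neg_apply, neg_inj]
    exact (hr _ _).symm
  have pC : ∀ ξ η ζ : Module.Dual K A,
      P3 ξ η ζ (c1223 m (r ⊗ₜ r)) = ξ (rmap (η ∘ₗ m.flip (rmap ζ))) := by
    intro ξ η ζ
    rw [lemC, hctr2, ← hr]
  have key : ∀ ξ η ζ : Module.Dual K A,
      P3 ξ η ζ (mockYB m r) =
        ξ (m (rmap η) (rmap ζ)
            - (rmap (ζ ∘ₗ m.flip (rmap η)) + rmap (η ∘ₗ m.flip (rmap ζ)))) := by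
    intro ξ η ζ
    simp only [mockYB, map_add, map_sub, pA ξ η ζ, pB ξ η ζ, pC ξ η ζ]
    ring
  -- reformulation of `mockYB m r = 0`
  have main_equiv : mockYB m r = 0 ↔
      ∀ η ζ : Module.Dual K A,
        m (rmap η) (rmap ζ)
          = rmap (ζ ∘ₗ m.flip (rmap η)) + rmap (η ∘ₗ m.flip (rmap ζ)) := by
    constructor
    · intro h0 η ζ
      rw [← sub_eq_zero, ← Module.forall_dual_apply_eq_zero_iff K]
      intro ξ
      have := key ξ η ζ
      rw [h0, map_zero] at this
      exact this.symm
    · intro hRB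
      apply sep
      intro ξ η ζ
      rw [key ξ η ζ, hRB η ζ, sub_self, map_zero]
  -- surjectivity of `ω : A → Dual A`
  have hsurj : ∀ η : Module.Dual K A, ∃ x : A, ω x = η := by
    intro η
    refine ⟨(LinearMap.BilinForm.toDual ω hnd).symm η, ?_⟩
    ext v
    exact LinearMap.BilinForm.apply_toDual_symm_apply η v
  -- translation between functional composites and `ω` of products
  have e1 : ∀ (u y : A), (ω y) ∘ₗ m.flip u = ω (m u y) := by
    intro u y
    ext b
    have h1 : ω (m u y) b = ω u (m y b) := hinv u y b
    have h2 : ω u (m y b) = ω (m y b) u := hsym u (m y b)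
    have h3 : ω (m y b) u = ω y (m b u) := hinv y b u
    simp only [LinearMap.comp_apply, LinearMap.flip_apply]
    rw [h1, h2, h3]
  have e2 : ∀ (u x : A), (ω x) ∘ₗ m.flip u = ω (m x u) := by
    intro u x
    ext b
    simp only [LinearMap.comp_apply, LinearMap.flip_apply]
    rw [hinv x u b, hcomm u b]
  rw [main_equiv]
  constructor
  · intro h x y
    have := h (ω x) (ω y)
    rw [e1 (rmap (ω x)) y, e2 (rmap (ω y)) x] at this
    rw [this, map_add, map_add]
  · intro h η ζ
    obtain ⟨x, rfl⟩ := hsurj η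
    obtain ⟨y, rfl⟩ := hsurj ζ
    rw [e1 (rmap (ω x)) y, e2 (rmap (ω y)) x, ← map_add, ← map_add]
    exact h x y
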